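/- arXiv:1302.2991 — 2 statements merged into one kernel-verified Lean document; each statement's English description precedes it below -/
import Mathlib

section
/- Let 𝒵 be a noetherian abelian category of homological dimension at most n and let T be an object of 𝒵. Set B_n := {E ∈ 𝒵 : Ext^n(T,E) = 0}. Then (B_n, B_n°) is a torsion pair in 𝒵. -/
/-! In a noetherian abelian category, let `P` be a class of objects containing `0` and closed
under quotients and extensions, and let `M` be a maximal subobject of `E` lying in `P`. Then
`E / M ∈ P°`: the image `I` of a map `V ⟶ E / M` with `V ∈ P` lies in `P`, and the preimage of
`I` in `E` is an extension of `I` by `M`, so it lies in `P` and equals `M` by maximality, forcing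
`I = 0`. The class `B_n` is closed under extensions by the long exact sequence of `Ext(T, -)`, and
under quotients because `Ext^{n+1}(T, -)` vanishes. -/

open CategoryTheory Limits Abelian

namespace TorsionPairs

universe w w' v u v' u'

variable {C : Type u} [Category.{v} C] [Abelian C]

/-- `f : X ⟶ Y` and `g : Y ⟶ Z` form a short exact sequence `0 ⟶ X ⟶ Y ⟶ Z ⟶ 0` in `C`. -/
def IsShortExactSeq {X Y Z : C} (f : X ⟶ Y) (g : Y ⟶ Z) : Prop :=
  ∃ w : f ≫ g = 0, (ShortComplex.mk f g w).ShortExact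

/-- The right perpendicular class `𝒱°` of a class of objects `𝒱` (given as a predicate):
the objects `E` with `Hom(V, E) = 0` for all `V ∈ 𝒱`. -/
def Perp (P : C → Prop) : C → Prop := fun E => ∀ (V : C), P V → ∀ f : V ⟶ E, f = 0

/-- A class of objects is closed under quotient objects. -/
def ClosedUnderQuotients (P : C → Prop) : Prop :=
  ∀ ⦃X Q : C⦄ (p : X ⟶ Q), Epi p → P X → P Q

/-- A class of objects is closed under extensions. -/
def ClosedUnderExt (P : C → Prop) : Prop :=
  ∀ ⦃X E Y : C⦄ (f : X ⟶ E) (g : E ⟶ Y), IsShortExactSeq f g → P X → P Y → P E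

/-- `(T, F)` is a torsion pair in the abelian category `C`: `Hom(X, Y) = 0` whenever
`T X` and `F Y`, and every object `E` fits into a short exact sequence
`0 ⟶ X ⟶ E ⟶ Y ⟶ 0` with `T X` and `F Y`. -/
def IsTorsionPair (T F : C → Prop) : Prop :=
  (∀ (X Y : C), T X → F Y → ∀ f : X ⟶ Y, f = 0) ∧
  (∀ E : C, ∃ (X Y : C) (f : X ⟶ E) (g : E ⟶ Y), T X ∧ F Y ∧ IsShortExactSeq f g)

/-- The extension closure of a class of objects: the smallest class of objects containing
the zero objects and the given class, and closed under extensions. -/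
inductive ExtClosure (P : C → Prop) : C → Prop
  | zero (X : C) (hX : IsZero X) : ExtClosure P X
  | of (X : C) (hX : P X) : ExtClosure P X
  | ext {X E Y : C} (f : X ⟶ E) (g : E ⟶ Y) (h : IsShortExactSeq f g)
      (hX : ExtClosure P X) (hY : ExtClosure P Y) : ExtClosure P E

/-- The class of quotient objects of objects of `S`. -/
def QuotClass (S : C → Prop) : C → Prop := fun E => ∃ (E' : C) (p : E' ⟶ E), Epi p ∧ S E'

/-- `[S]`: the extension closure of the class of quotient objects of objects of `S`. -/
def ExtClosQuot (S : C → Prop) : C → Prop := ExtClosure (QuotClass S)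

section TorsionClass

open ZeroObject

variable {P : C → Prop}

lemma shortExact_cokernel {X Y : C} (f : X ⟶ Y) [Mono f] :
    (ShortComplex.mk f (cokernel.π f) (cokernel.condition f)).ShortExact :=
  .mk' (ShortComplex.exact_of_g_is_cokernel _ (cokernelIsCokernel f)) inferInstance inferInstance

lemma shortExact_kernel {X Y : C} (f : X ⟶ Y) [Epi f] :
    (ShortComplex.mk (kernel.ι f) f (kernel.condition f)).ShortExact :=
  .mk' (ShortComplex.exact_of_f_is_kernel _ (kernelIsKernel f)) inferInstance inferInstance

lemma shortExact_pullback_snd {S : ShortComplex C} (hS : S.ShortExact) {I : C} (i : I ⟶ S.X₃)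
    [Mono i] :
    (ShortComplex.mk (pullback.lift S.f 0 (by simp)) (pullback.snd S.g i)
      (pullback.lift_snd _ _ _)).ShortExact := by
  have := hS.mono_f
  have := hS.epi_g
  have : Mono (pullback.lift S.f 0 (by simp) : S.X₁ ⟶ pullback S.g i) :=
    mono_of_mono_fac (pullback.lift_fst _ _ _)
  refine { exact := ?_, epi_g := Abelian.epi_pullback_of_epi_f S.g i }
  rw [ShortComplex.exact_iff_exact_up_to_refinements]
  intro A x₂ hx₂
  obtain ⟨A', π, hπ, x₁, hx₁⟩ := hS.exact.exact_up_to_refinements (x₂ ≫ pullback.fst _ _)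
    (by simpa [pullback.condition] using congrArg (· ≫ i) hx₂)
  refine ⟨A', π, hπ, x₁, pullback.hom_ext ?_ ?_⟩ <;> dsimp at hx₂ ⊢
  · rw [Category.assoc, Category.assoc, pullback.lift_fst, hx₁]
  · rw [Category.assoc, Category.assoc, pullback.lift_snd, hx₂, comp_zero, comp_zero]

lemma perp_cokernel_of_maximal (hq : ClosedUnderQuotients P) (he : ClosedUnderExt P) {E : C}
    (m : Subobject E) (hm : P m) (hmax : ∀ N : Subobject E, P N → ¬ m < N) :
    Perp P (cokernel m.arrow) := by
  intro V hV f
  set g := cokernel.π m.arrow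
  set i := Limits.image.ι f
  have hI : P (Limits.image f) := hq (factorThruImage f) inferInstance hV
  have hS := shortExact_pullback_snd (shortExact_cokernel m.arrow) i
  have hN : P (Subobject.mk (pullback.fst g i)) :=
    hq (Subobject.underlyingIso _).inv inferInstance (he _ _ ⟨_, hS⟩ hm hI)
  have hle : m ≤ Subobject.mk (pullback.fst g i) :=
    Subobject.le_mk_of_comm (pullback.lift m.arrow 0 (by simp [g])) (pullback.lift_fst _ _ _)
  have heq := (lt_or_eq_of_le hle).resolve_left (hmax _ hN)
  have hfst : pullback.fst g i ≫ g = 0 := by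
    rw [← Subobject.ofMkLE_arrow heq.ge, Category.assoc, cokernel.condition, comp_zero]
  have hi : i = 0 := zero_of_epi_comp (pullback.snd g i) (by rw [← pullback.condition, hfst])
  calc f = factorThruImage f ≫ i := (Limits.image.fac f).symm
    _ = 0 := by rw [hi, comp_zero]

lemma isTorsionPair_perp (hNoeth : ∀ X : C, IsNoetherianObject X) (h0 : P 0)
    (hq : ClosedUnderQuotients P) (he : ClosedUnderExt P) : IsTorsionPair P (Perp P) := by
  refine ⟨fun X Y hX hY f => hY X hX f, fun E => ?_⟩
  have := hNoeth E
  obtain ⟨m, hm, hmax⟩ := (wellFounded_gt (α := Subobject E)).has_min {S | P (S : C)}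
    ⟨⊥, hq Subobject.botCoeIsoZero.inv inferInstance h0⟩
  exact ⟨m, cokernel m.arrow, m.arrow, cokernel.π m.arrow, hm,
    perp_cokernel_of_maximal hq he m hm hmax, cokernel.condition _,
    shortExact_cokernel m.arrow⟩

end TorsionClass

variable [HasExt.{w} C]

section Ext

open ZeroObject

variable (T : C) (n : ℕ)

lemma subsingleton_ext_zero : Subsingleton (Ext T 0 n) :=
  subsingleton_of_forall_eq 0 fun x => by
    rw [← Ext.comp_mk₀_id x, (isZero_zero C).eq_of_src (𝟙 0) 0, Ext.mk₀_zero, Ext.comp_zero]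

lemma closedUnderExt_subsingleton_ext : ClosedUnderExt (fun E => Subsingleton (Ext T E n)) := by
  rintro X E Y f g ⟨_, hS⟩ hX hY
  refine subsingleton_of_forall_eq 0 fun x => ?_
  obtain ⟨x₁, rfl⟩ := Ext.covariant_sequence_exact₂ T hS x (Subsingleton.elim _ _)
  rw [Subsingleton.elim x₁ 0, Ext.zero_comp]

lemma closedUnderQuotients_subsingleton_ext (h : ∀ K : C, Subsingleton (Ext T K (n + 1))) :
    ClosedUnderQuotients (fun E => Subsingleton (Ext T E n)) := by
  intro X Q p hp hX
  refine subsingleton_of_forall_eq 0 fun x => ?_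
  obtain ⟨x₂, rfl⟩ :=
    Ext.covariant_sequence_exact₃ T (shortExact_kernel p) x rfl (Subsingleton.elim _ _)
  rw [Subsingleton.elim x₂ 0, Ext.zero_comp]

end Ext

/-- Let `𝒵` be a noetherian abelian category of homological dimension at most
`n` and `T` an object of `𝒵`.  With `B_n = {E : Ext^n(T,E) = 0}`, the pair `(B_n, B_n°)`
is a torsion pair in `𝒵`. -/
theorem isTorsionPair_Bn
    (hNoeth : ∀ X : C, IsNoetherianObject X) (n : ℕ)
    (hdim : ∀ (X Y : C) (i : ℕ), n < i → Subsingleton (Ext X Y i)) (T : C) :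
    IsTorsionPair (fun E => Subsingleton (Ext T E n))
      (Perp (fun E => Subsingleton (Ext T E n))) :=
  isTorsionPair_perp hNoeth (subsingleton_ext_zero T n)
    (closedUnderQuotients_subsingleton_ext T n fun K => hdim T K (n + 1) n.lt_succ_self)
    (closedUnderExt_subsingleton_ext T n)

end TorsionPairs
end

section
/- Let 𝒵 be an abelian category and S any full subcategory of 𝒵. Then [S] is closed under quotients: for every epimorphism E ↠ E′ in 𝒵 with E ∈ [S], the object E′ also lies in [S]. -/
open CategoryTheory Limits Abelian

/-! A quotient `p : E ↠ Q` of an extension `0 ⟶ X ⟶ E ⟶ Y ⟶ 0` is itself an extension of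
`coker (f ≫ p)` by `im (f ≫ p)`; the image is a quotient of `X` and the cokernel a quotient of
`Y`, so induction on the extension closure reduces everything to quotients of quotients. -/

namespace TorsionPairs

universe v u

variable {C : Type u} [Category.{v} C]

theorem quotClass_closedUnderQuotients (S : C → Prop) : ClosedUnderQuotients (QuotClass S) := by
  rintro X Q p hp ⟨E', q, hq, hS⟩
  exact ⟨E', q ≫ p, epi_comp q p, hS⟩

variable [Abelian C]

theorem isShortExactSeq_kernel_cokernel {X Y : C} (f : X ⟶ Y) :
    IsShortExactSeq (kernel.ι (cokernel.π f)) (cokernel.π f) :=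
  ⟨kernel.condition _, { exact := ShortComplex.exact_of_f_is_kernel _ (kernelIsKernel _) }⟩

theorem IsShortExactSeq.exists_epi_cokernel_comp {X E Y Q : C} {f : X ⟶ E} {g : E ⟶ Y}
    (h : IsShortExactSeq f g) (p : E ⟶ Q) [Epi p] : ∃ l : Y ⟶ cokernel (f ≫ p), Epi l := by
  obtain ⟨_, hse⟩ := h
  have := hse.epi_g
  obtain ⟨l, hl⟩ := hse.exact.desc' (p ≫ cokernel.π (f ≫ p))
    (by rw [← Category.assoc, cokernel.condition])
  have : Epi (g ≫ l) := hl ▸ epi_comp _ _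
  exact ⟨l, epi_of_epi g l⟩

theorem ExtClosure.closedUnderQuotients {P : C → Prop} (hP : ClosedUnderQuotients P) :
    ClosedUnderQuotients (ExtClosure P) := by
  intro E Q p hp hE
  induction hE generalizing Q with
  | zero X hX => exact .zero Q (hX.of_epi p)
  | of X hX => exact .of Q (hP p hp hX)
  | ext f g h _ _ ihX ihY =>
    obtain ⟨l, hl⟩ := h.exists_epi_cokernel_comp p
    exact .ext _ _ (isShortExactSeq_kernel_cokernel (f ≫ p))
      (ihX (Abelian.factorThruImage (f ≫ p)) inferInstance) (ihY l hl)

/-- For any full subcategory `S` of an abelian category `𝒵`, the class `[S]`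
is closed under quotients. -/
theorem extClosQuot_closedUnderQuotients (S : C → Prop) :
    ClosedUnderQuotients (ExtClosQuot S) :=
  ExtClosure.closedUnderQuotients (quotClass_closedUnderQuotients S)

end TorsionPairs
end
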